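/- arXiv:2110.06492 — 2 statements merged into one kernel-verified Lean document; each statement's English description precedes it below -/
import Mathlib

section
/- Let V be a type of nodes, s : V → ℝ an injective function with s(v) > 0 for every v, adj : V → V → Prop a symmetric adjacency relation on V, and d_max : ℝ a constant with d_max > 1/s(v) for every v ∈ V. Define d : V → V → ℝ by d(i,j) = 1/s(i) if i = j, d(i,j) = max(1/s(i), 1/s(j)) if i ≠ j and adj(i,j), and d(i,j) = d_max otherwise. Then indistancy implies equality: for all i, j ∈ V, if d(i,i) = d(i,j) and d(j,j) = d(i,j), then i = j. -/
theorem stmt_4_general {V : Type*} (s : V → ℝ)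
    (hinj : Function.Injective s)
    (d : V → V → ℝ)
    (hd_self : ∀ i, d i i = 1 / s i) :
    ∀ i j : V, d i i = d i j → d j j = d i j → i = j := by
  intro i j hi hj
  have hsame : 1 / s i = 1 / s j := by rw [← hd_self, ← hd_self, hi, hj]
  exact hinj (by simpa only [one_div, inv_inj] using hsame)

theorem stmt_4 {V : Type*} (s : V → ℝ) (hs : ∀ v, 0 < s v)
    (hinj : Function.Injective s)
    (adj : V → V → Prop) (hadj : Symmetric adj)
    (dmax : ℝ) (hdmax : ∀ v, 1 / s v < dmax)
    (d : V → V → ℝ)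
    (hd_self : ∀ i, d i i = 1 / s i)
    (hd_adj : ∀ i j : V, i ≠ j → adj i j → d i j = max (1 / s i) (1 / s j))
    (hd_far : ∀ i j : V, i ≠ j → ¬ adj i j → d i j = dmax) :
    ∀ i j : V, d i i = d i j → d j j = d i j → i = j :=
  stmt_4_general s hinj d hd_self
end

section
/- Let V be a type of nodes, s : V → ℝ a function with s(v) > 0 for every v, adj : V → V → Prop a symmetric adjacency relation, and d_max : ℝ. Define d(i,j) = 1/s(i) if i = j, d(i,j) = max(1/s(i), 1/s(j)) if i ≠ j and adj(i,j), and d(i,j) = d_max otherwise. For ε > 0, let G_Morse(ε) be the simple graph on V in which distinct nodes i, j are joined exactly when adj(i,j) and s(i) ≥ ε and s(j) ≥ ε, and for δ ∈ ℝ let G_Rips(δ) be the simple graph on V in which distinct nodes i, j are joined exactly when d(i,j) ≤ δ. Then for every ε > 0 with 1/ε < d_max, the graphs G_Morse(ε) and G_Rips(1/ε) are equal (they have the same adjacency relation). -/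
theorem max_one_div_le_one_div_iff {K : Type*} [Field K] [LinearOrder K] [IsStrictOrderedRing K]
    {a b ε : K} (ha : 0 < a) (hb : 0 < b) (hε : 0 < ε) :
    max (1 / a) (1 / b) ≤ 1 / ε ↔ ε ≤ a ∧ ε ≤ b := by
  rw [max_le_iff, one_div_le_one_div ha hε, one_div_le_one_div hb hε]

theorem stmt_7_general {V : Type*} (s : V → ℝ) (hs : ∀ v, 0 < s v)
    (adj : V → V → Prop)
    (dmax : ℝ)
    (d : V → V → ℝ)
    (hd_adj : ∀ i j : V, i ≠ j → adj i j → d i j = max (1 / s i) (1 / s j))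
    (hd_far : ∀ i j : V, i ≠ j → ¬ adj i j → d i j = dmax)
    (ε : ℝ) (hε : 0 < ε) (hεd : 1 / ε < dmax)
    (GMorse GRips : SimpleGraph V)
    (hGM : ∀ i j : V, GMorse.Adj i j ↔ i ≠ j ∧ adj i j ∧ ε ≤ s i ∧ ε ≤ s j)
    (hGR : ∀ i j : V, GRips.Adj i j ↔ i ≠ j ∧ d i j ≤ 1 / ε) :
    GMorse = GRips := by
  ext i j
  rw [hGM, hGR]
  refine and_congr_right fun hij => ?_
  by_cases ha : adj i j
  · rw [hd_adj i j hij ha, max_one_div_le_one_div_iff (hs i) (hs j) hε]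
    exact and_iff_right ha
  · rw [hd_far i j hij ha]
    exact iff_of_false (fun h => ha h.1) hεd.not_ge

theorem stmt_7 {V : Type*} (s : V → ℝ) (hs : ∀ v, 0 < s v)
    (adj : V → V → Prop) (hadj : Symmetric adj)
    (dmax : ℝ)
    (d : V → V → ℝ)
    (hd_self : ∀ i, d i i = 1 / s i)
    (hd_adj : ∀ i j : V, i ≠ j → adj i j → d i j = max (1 / s i) (1 / s j))
    (hd_far : ∀ i j : V, i ≠ j → ¬ adj i j → d i j = dmax)
    (ε : ℝ) (hε : 0 < ε) (hεd : 1 / ε < dmax)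
    (GMorse GRips : SimpleGraph V)
    (hGM : ∀ i j : V, GMorse.Adj i j ↔ i ≠ j ∧ adj i j ∧ ε ≤ s i ∧ ε ≤ s j)
    (hGR : ∀ i j : V, GRips.Adj i j ↔ i ≠ j ∧ d i j ≤ 1 / ε) :
    GMorse = GRips :=
  stmt_7_general s hs adj dmax d hd_adj hd_far ε hε hεd GMorse GRips hGM hGR
end
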